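/- Let X →u Y →v Z →w ΣX be a distinguished triangle and let h: Z→ΣX be a morphism such that (u, v, h) is a map of triangles from (u,v,w) to its rotation Y →v Z →w ΣX →(−Σu) ΣY (i.e., h∘v = w∘v and (−Σu)∘h = (Σu)∘w). Then the following are equivalent: (a) (u,v,h) is good; (b) (u,v,h) is Verdier good; (c) there exists φ: ΣX→ΣX with φ∘w = h and (Σu)∘φ = 0 (i.e., the Toda bracket ⟨−Σu, h, v⟩ contains zero); (d) h is a lightning flash, i.e., h = w∘θ∘w for some θ: ΣX→Z. Moreover, in the case h = w, these conditions are also equivalent to the triangle X →u Y →v Z →w ΣX being contractible. -/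

import Mathlib

open CategoryTheory Category Limits Pretriangulated

universe v u

variable {C : Type u} [Category.{v} C] [Preadditive C] [HasZeroObject C]
  [HasShift C ℤ] [∀ n : ℤ, (shiftFunctor C n).Additive] [Pretriangulated C]
  [IsTriangulated C] [HasBinaryBiproducts C]

noncomputable local instance (n : ℤ) : PreservesBinaryBiproducts (shiftFunctor C n) :=
  preservesBinaryBiproducts_of_preservesBiproducts _

/-- The condition that `(f, g, h)` is a morphism of triangles from `T` to `T'`. -/
def IsTriMap (T T' : Triangle C) (f : T.obj₁ ⟶ T'.obj₁) (g : T.obj₂ ⟶ T'.obj₂)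
    (h : T.obj₃ ⟶ T'.obj₃) : Prop :=
  T.mor₁ ≫ g = f ≫ T'.mor₁ ∧ T.mor₂ ≫ h = g ≫ T'.mor₂ ∧
    T.mor₃ ≫ f⟦(1 : ℤ)⟧' = h ≫ T'.mor₃

/-- The mapping cone of a morphism of triangles. -/
noncomputable def mappingCone (T T' : Triangle C) (f : T.obj₁ ⟶ T'.obj₁)
    (g : T.obj₂ ⟶ T'.obj₂) (h : T.obj₃ ⟶ T'.obj₃) : Triangle C :=
  Triangle.mk
    (biprod.desc (biprod.lift T'.mor₁ 0) (biprod.lift g (-T.mor₂)) :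
      T'.obj₁ ⊞ T.obj₂ ⟶ T'.obj₂ ⊞ T.obj₃)
    (biprod.desc (biprod.lift T'.mor₂ 0) (biprod.lift h (-T.mor₃)) :
      T'.obj₂ ⊞ T.obj₃ ⟶ T'.obj₃ ⊞ T.obj₁⟦(1 : ℤ)⟧)
    (biprod.desc (biprod.lift T'.mor₃ 0)
        (biprod.lift (f⟦(1 : ℤ)⟧') (-(T.mor₁⟦(1 : ℤ)⟧'))) ≫
      ((shiftFunctor C (1 : ℤ)).mapBiprod T'.obj₁ T.obj₂).inv)

/-- A morphism of triangles is good if its mapping cone is distinguished. -/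
noncomputable def IsGood (T T' : Triangle C) (f : T.obj₁ ⟶ T'.obj₁)
    (g : T.obj₂ ⟶ T'.obj₂) (h : T.obj₃ ⟶ T'.obj₃) : Prop :=
  mappingCone T T' f g h ∈ distTriang C

/-- An octahedron on composable maps `a`, `b`, given distinguished triangles
`(a, p₁, q₁)`, `(b, p₂, q₂)` and `(a ≫ b, p₃, q₃)`, is a pair `(m, n)` as below. -/
def IsOctahedron {A₁ A₂ A₃ B₁ B₂ B₃ : C} (a : A₁ ⟶ A₂) (b : A₂ ⟶ A₃)
    (p₁ : A₂ ⟶ B₁) (q₁ : B₁ ⟶ A₁⟦(1 : ℤ)⟧)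
    (p₂ : A₃ ⟶ B₂) (q₂ : B₂ ⟶ A₂⟦(1 : ℤ)⟧)
    (p₃ : A₃ ⟶ B₃) (q₃ : B₃ ⟶ A₁⟦(1 : ℤ)⟧)
    (m : B₁ ⟶ B₃) (n : B₃ ⟶ B₂) : Prop :=
  p₁ ≫ m = b ≫ p₃ ∧ m ≫ q₃ = q₁ ∧ p₃ ≫ n = p₂ ∧ n ≫ q₂ = q₃ ≫ a⟦(1 : ℤ)⟧' ∧
    (Triangle.mk m n (q₂ ≫ p₁⟦(1 : ℤ)⟧') ∈ distTriang C)

/-- A morphism of triangles `(f, g, h)` is Verdier good if `h` arises from Verdier's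
construction via two octahedra on the composite `g ∘ u = u' ∘ f`. -/
def IsVerdierGood (T T' : Triangle C) (f : T.obj₁ ⟶ T'.obj₁) (g : T.obj₂ ⟶ T'.obj₂)
    (h : T.obj₃ ⟶ T'.obj₃) : Prop :=
  ∃ (A Y'' X'' : C) (vt : T'.obj₂ ⟶ A) (wt : A ⟶ T.obj₁⟦(1 : ℤ)⟧)
    (g' : T'.obj₂ ⟶ Y'') (g'' : Y'' ⟶ T.obj₂⟦(1 : ℤ)⟧)
    (f' : T'.obj₁ ⟶ X'') (f'' : X'' ⟶ T.obj₁⟦(1 : ℤ)⟧)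
    (α₁ : T.obj₃ ⟶ A) (β₁ : A ⟶ Y'') (α₂ : X'' ⟶ A) (β₂ : A ⟶ T'.obj₃),
    (Triangle.mk (T.mor₁ ≫ g) vt wt ∈ distTriang C) ∧
    (Triangle.mk g g' g'' ∈ distTriang C) ∧
    (Triangle.mk f f' f'' ∈ distTriang C) ∧
    IsOctahedron T.mor₁ g T.mor₂ T.mor₃ g' g'' vt wt α₁ β₁ ∧
    IsOctahedron f T'.mor₁ f' f'' T'.mor₂ T'.mor₃ vt wt α₂ β₂ ∧
    h = α₁ ≫ β₂

/-- The morphism of triangles `(f, g, h)` is nullhomotopic, in the (equivalent)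
`Σ`-applied formulation of the first equation. -/
def IsNullHomotopic (T T' : Triangle C) (f : T.obj₁ ⟶ T'.obj₁) (g : T.obj₂ ⟶ T'.obj₂)
    (h : T.obj₃ ⟶ T'.obj₃) : Prop :=
  ∃ (F : T.obj₂ ⟶ T'.obj₁) (G : T.obj₃ ⟶ T'.obj₂) (H : T.obj₁⟦(1 : ℤ)⟧ ⟶ T'.obj₃),
    f⟦(1 : ℤ)⟧' = T.mor₁⟦(1 : ℤ)⟧' ≫ F⟦(1 : ℤ)⟧' + H ≫ T'.mor₃ ∧
    g = T.mor₂ ≫ G + F ≫ T'.mor₁ ∧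
    h = T.mor₃ ≫ H + G ≫ T'.mor₂

/-- A triangle is contractible if its identity morphism is nullhomotopic. -/
def IsContractible (T : Triangle C) : Prop :=
  IsNullHomotopic T T (𝟙 T.obj₁) (𝟙 T.obj₂) (𝟙 T.obj₃)

/-- A morphism of triangles is middling good if it extends to a 4 × 4 diagram. -/
def IsMiddlingGood (T T' : Triangle C) (f : T.obj₁ ⟶ T'.obj₁) (g : T.obj₂ ⟶ T'.obj₂)
    (h : T.obj₃ ⟶ T'.obj₃) : Prop :=
  ∃ (X'' Y'' Z'' : C)
    (f' : T'.obj₁ ⟶ X'') (f'' : X'' ⟶ T.obj₁⟦(1 : ℤ)⟧)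
    (g' : T'.obj₂ ⟶ Y'') (g'' : Y'' ⟶ T.obj₂⟦(1 : ℤ)⟧)
    (h' : T'.obj₃ ⟶ Z'') (h'' : Z'' ⟶ T.obj₃⟦(1 : ℤ)⟧)
    (u'' : X'' ⟶ Y'') (v'' : Y'' ⟶ Z'') (w'' : Z'' ⟶ X''⟦(1 : ℤ)⟧),
    (Triangle.mk f f' f'' ∈ distTriang C) ∧
    (Triangle.mk g g' g'' ∈ distTriang C) ∧
    (Triangle.mk h h' h'' ∈ distTriang C) ∧
    (Triangle.mk u'' v'' w'' ∈ distTriang C) ∧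
    T'.mor₁ ≫ g' = f' ≫ u'' ∧
    T'.mor₂ ≫ h' = g' ≫ v'' ∧
    T'.mor₃ ≫ f'⟦(1 : ℤ)⟧' = h' ≫ w'' ∧
    u'' ≫ g'' = f'' ≫ T.mor₁⟦(1 : ℤ)⟧' ∧
    v'' ≫ h'' = g'' ≫ T.mor₂⟦(1 : ℤ)⟧' ∧
    h'' ≫ T.mor₃⟦(1 : ℤ)⟧' = -(w'' ≫ f''⟦(1 : ℤ)⟧')

/-- A candidate triangle `(a, b, c)` is replaceably exact if each of its three maps
can be replaced to give a distinguished triangle. -/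
def ReplaceablyExact {A B D : C} (a : A ⟶ B) (b : B ⟶ D) (c : D ⟶ A⟦(1 : ℤ)⟧) : Prop :=
  (∃ a' : A ⟶ B, Triangle.mk a' b c ∈ distTriang C) ∧
  (∃ b' : B ⟶ D, Triangle.mk a b' c ∈ distTriang C) ∧
  (∃ c' : D ⟶ A⟦(1 : ℤ)⟧, Triangle.mk a b c' ∈ distTriang C)


section Aux19

set_option linter.unusedSectionVars false
set_option maxHeartbeats 1000000

lemma hasProd_pair (f : WalkingPair → C) : HasProduct f := by
  have e : pair (f .left) (f .right) ≅ Discrete.functor f :=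
    Discrete.natIso (fun j => by rcases j with ⟨_|_⟩ <;> exact Iso.refl _)
  exact hasLimit_of_iso e

noncomputable def biprodPiIso (f : WalkingPair → C) [HasProduct f] :
    (f .left ⊞ f .right) ≅ ∏ᶜ f where
  hom := Pi.lift (fun j => match j with | .left => biprod.fst | .right => biprod.snd)
  inv := biprod.lift (Pi.π f .left) (Pi.π f .right)
  hom_inv_id := by ext <;> simp
  inv_hom_id := by
    apply limit.hom_ext
    rintro ⟨_|_⟩ <;> simp

lemma sum_dist (T₁ T₂ : Triangle C) (h₁ : T₁ ∈ distTriang C) (h₂ : T₂ ∈ distTriang C) :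
    Triangle.mk (biprod.map T₁.mor₁ T₂.mor₁) (biprod.map T₁.mor₂ T₂.mor₂)
      (biprod.map T₁.mor₃ T₂.mor₃ ≫
        ((shiftFunctor C (1 : ℤ)).mapBiprod T₁.obj₁ T₂.obj₁).inv) ∈ distTriang C := by
  classical
  set P : WalkingPair → Triangle C := fun j => WalkingPair.casesOn j T₁ T₂ with hP
  haveI : ∀ (f : WalkingPair → C), HasProduct f := hasProd_pair
  have hdist := productTriangle_distinguished P (by rintro (_|_) <;> assumption)
  refine isomorphic_distinguished _ hdist _
    (Triangle.isoMk _ _ (biprodPiIso (fun j => (P j).obj₁)) (biprodPiIso (fun j => (P j).obj₂))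
      (biprodPiIso (fun j => (P j).obj₃)) ?_ ?_ ?_)
  · apply Pi.hom_ext
    rintro (_|_) <;> simp [biprodPiIso, productTriangle, Triangle.mk, P]
  · apply Pi.hom_ext
    rintro (_|_) <;> simp [biprodPiIso, productTriangle, Triangle.mk, P]
  · refine (cancel_mono (piComparison (shiftFunctor C (1 : ℤ)) (fun j => (P j).obj₁))).1 ?_
    rw [Functor.mapBiprod_inv]
    dsimp [productTriangle, biprodPiIso, Triangle.mk, P]
    simp only [assoc, IsIso.inv_hom_id, comp_id]
    apply limit.hom_ext
    rintro ⟨_|_⟩ <;>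
      · simp only [assoc, piComparison_comp_π, ← Functor.map_comp, limit.lift_π, Fan.mk_π_app]
        apply biprod.hom_ext' <;>
          simp [Functor.mapBiprod_inv, ← Functor.map_comp]


section Main19

variable {X Y Z : C} (u : X ⟶ Y) (v : Y ⟶ Z) (w : Z ⟶ X⟦(1 : ℤ)⟧)

lemma neg_tri_dist (hT : Triangle.mk u v w ∈ distTriang C) :
    Triangle.mk (-v) (-w) (-(u⟦(1 : ℤ)⟧')) ∈ distTriang C := by
  refine isomorphic_distinguished _ (rot_of_distTriang _ hT) _
    (Triangle.isoMk _ _ (Iso.refl _) (⟨-𝟙 Z, -𝟙 Z, by simp, by simp⟩ : Z ≅ Z) (Iso.refl _) ?_ ?_ ?_) <;>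
    simp [Triangle.mk, Triangle.rotate]

lemma mappingCone_rot_eq (h : Z ⟶ X⟦(1 : ℤ)⟧) :
    mappingCone (Triangle.mk u v w) (Triangle.mk v w (-(u⟦(1 : ℤ)⟧'))) u v h =
      Triangle.mk (biprod.desc (biprod.lift v 0) (biprod.lift v (-v)) : Y ⊞ Y ⟶ Z ⊞ Z)
        (biprod.desc (biprod.lift w 0) (biprod.lift h (-w)) : Z ⊞ Z ⟶ X⟦(1 : ℤ)⟧ ⊞ X⟦(1 : ℤ)⟧)
        (biprod.desc (biprod.lift (-(u⟦(1 : ℤ)⟧')) 0)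
          (biprod.lift (u⟦(1 : ℤ)⟧') (-(u⟦(1 : ℤ)⟧'))) ≫
          ((shiftFunctor C (1 : ℤ)).mapBiprod Y Y).inv) := rfl

lemma good_of_c (hT : Triangle.mk u v w ∈ distTriang C) (h : Z ⟶ X⟦(1 : ℤ)⟧)
    (φ : X⟦(1 : ℤ)⟧ ⟶ X⟦(1 : ℤ)⟧) (hφ1 : w ≫ φ = h) (hφ2 : φ ≫ u⟦(1 : ℤ)⟧' = 0) :
    mappingCone (Triangle.mk u v w) (Triangle.mk v w (-(u⟦(1 : ℤ)⟧'))) u v h ∈ distTriang C := by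
  rw [mappingCone_rot_eq]
  have hsum : Triangle.mk (biprod.map v (-v)) (biprod.map w (-w))
      (biprod.map (-(u⟦(1 : ℤ)⟧')) (-(u⟦(1 : ℤ)⟧')) ≫
        ((shiftFunctor C (1 : ℤ)).mapBiprod Y Y).inv) ∈ distTriang C :=
    sum_dist (Triangle.mk v w (-(u⟦(1 : ℤ)⟧')))
    (Triangle.mk (-v) (-w) (-(u⟦(1 : ℤ)⟧'))) (rot_of_distTriang _ hT) (neg_tri_dist u v w hT)
  refine isomorphic_distinguished _ hsum _
    (Triangle.isoMk _ _
      (⟨𝟙 _ + biprod.snd ≫ biprod.inl, 𝟙 _ - biprod.snd ≫ biprod.inl, by simp, by simp⟩ :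
        (Y ⊞ Y : C) ≅ Y ⊞ Y)
      (Iso.refl _)
      (⟨𝟙 _ + biprod.snd ≫ φ ≫ biprod.inl, 𝟙 _ - biprod.snd ≫ φ ≫ biprod.inl,
        by simp, by simp⟩ : (X⟦(1 : ℤ)⟧ ⊞ X⟦(1 : ℤ)⟧ : C) ≅ X⟦(1 : ℤ)⟧ ⊞ X⟦(1 : ℤ)⟧)
      ?_ ?_ ?_)
  · dsimp [mappingCone, Triangle.mk]
    ext <;> simp
  · dsimp [mappingCone, Triangle.mk]
    ext <;> simp [reassoc_of% hφ1, hφ1]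
  · have hφ2' : ∀ {W : C} (k : Y ⟶ W), φ ≫ (shiftFunctor C (1 : ℤ)).map (u ≫ k) = 0 := by
      intro W k
      rw [Functor.map_comp, ← assoc, hφ2, zero_comp]
    rw [Functor.mapBiprod_inv]
    dsimp [mappingCone, Triangle.mk]
    apply biprod.hom_ext' <;>
      simp [← Functor.map_comp, reassoc_of% hφ2, hφ2, hφ2', Functor.mapBiprod_inv]


lemma c_of_good (hT : Triangle.mk u v w ∈ distTriang C) (h : Z ⟶ X⟦(1 : ℤ)⟧)
    (hg : mappingCone (Triangle.mk u v w) (Triangle.mk v w (-(u⟦(1 : ℤ)⟧'))) u v h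
      ∈ distTriang C) :
    ∃ φ : X⟦(1 : ℤ)⟧ ⟶ X⟦(1 : ℤ)⟧, w ≫ φ = h ∧ φ ≫ u⟦(1 : ℤ)⟧' = 0 := by
  rw [mappingCone_rot_eq] at hg
  have hsum : Triangle.mk (biprod.map v (-v)) (biprod.map w (-w))
      (biprod.map (-(u⟦(1 : ℤ)⟧')) (-(u⟦(1 : ℤ)⟧')) ≫
        ((shiftFunctor C (1 : ℤ)).mapBiprod Y Y).inv) ∈ distTriang C :=
    sum_dist (Triangle.mk v w (-(u⟦(1 : ℤ)⟧')))
    (Triangle.mk (-v) (-w) (-(u⟦(1 : ℤ)⟧'))) (rot_of_distTriang _ hT) (neg_tri_dist u v w hT)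
  obtain ⟨c, hc₁, hc₂⟩ : ∃ c : (X⟦(1 : ℤ)⟧ ⊞ X⟦(1 : ℤ)⟧ : C) ⟶ (X⟦(1 : ℤ)⟧ ⊞ X⟦(1 : ℤ)⟧ : C),
      biprod.map w (-w) ≫ c = biprod.desc (biprod.lift w 0) (biprod.lift h (-w)) ∧
      (biprod.map (-(u⟦(1 : ℤ)⟧')) (-(u⟦(1 : ℤ)⟧')) ≫
          ((shiftFunctor C (1 : ℤ)).mapBiprod Y Y).inv) ≫
          (shiftFunctor C (1 : ℤ)).map (𝟙 (Y ⊞ Y) - biprod.snd ≫ biprod.inl) =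
        c ≫ (biprod.desc (biprod.lift (-(u⟦(1 : ℤ)⟧')) 0)
          (biprod.lift (u⟦(1 : ℤ)⟧') (-(u⟦(1 : ℤ)⟧'))) ≫
          ((shiftFunctor C (1 : ℤ)).mapBiprod Y Y).inv) := by
    obtain ⟨c, hc₁, hc₂⟩ := complete_distinguished_triangle_morphism _ _ hsum hg
      ((𝟙 (Y ⊞ Y) - biprod.snd ≫ biprod.inl : Y ⊞ Y ⟶ Y ⊞ Y)) (𝟙 (Z ⊞ Z))
      (by dsimp [mappingCone, Triangle.mk]; ext <;> simp)
    exact ⟨c, by simpa [mappingCone, Triangle.mk] using hc₁, by simpa [mappingCone, Triangle.mk] using hc₂⟩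
  rw [Functor.mapBiprod_inv] at hc₂
  set c1 := biprod.inr ≫ c ≫ biprod.fst with hc1def
  set c2 := biprod.inr ≫ c ≫ biprod.snd with hc2def
  have hdec : biprod.inr ≫ c = biprod.lift c1 c2 := by
    rw [hc1def, hc2def]; apply biprod.hom_ext <;> simp
  refine ⟨-c1, ?_, ?_⟩
  · have e1 := congrArg (fun t => biprod.inr ≫ t ≫ biprod.fst) hc₁
    simp [reassoc_of% hdec] at e1
    simpa using e1
  · have e2 := congrArg
      (fun t => biprod.inr ≫ t ≫ (shiftFunctor C (1 : ℤ)).map (biprod.fst : Y ⊞ Y ⟶ Y)) hc₂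
    have e3 := congrArg
      (fun t => biprod.inr ≫ t ≫ (shiftFunctor C (1 : ℤ)).map (biprod.snd : Y ⊞ Y ⟶ Y)) hc₂
    simp [reassoc_of% hdec, ← Functor.map_comp, Functor.mapBiprod_inv] at e2 e3
    rw [← e3] at e2
    rw [Preadditive.neg_comp]
    exact right_eq_add.mp e2


lemma key_phi {A : C} (hT : Triangle.mk u v w ∈ distTriang C)
    (vt : Z ⟶ A) (wt : A ⟶ X⟦(1 : ℤ)⟧) (α : Z ⟶ A) (β : A ⟶ X⟦(1 : ℤ)⟧)
    (hvtwt : vt ≫ wt = 0)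
    (h1 : v ≫ α = v ≫ vt) (h2 : α ≫ wt = w) (h3 : vt ≫ β = w)
    (h4 : β ≫ (-(u⟦(1 : ℤ)⟧')) = wt ≫ u⟦(1 : ℤ)⟧') :
    ∃ φ : X⟦(1 : ℤ)⟧ ⟶ X⟦(1 : ℤ)⟧, w ≫ φ = α ≫ β ∧ φ ≫ u⟦(1 : ℤ)⟧' = 0 := by
  have hrot : Triangle.mk v w (-(u⟦(1 : ℤ)⟧')) ∈ distTriang C := rot_of_distTriang _ hT
  have hrot2 : Triangle.mk w (-(u⟦(1 : ℤ)⟧')) (-(v⟦(1 : ℤ)⟧')) ∈ distTriang C :=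
    rot_of_distTriang _ hrot
  have hwu : w ≫ u⟦(1 : ℤ)⟧' = 0 := comp_distTriang_mor_zero₃₁ _ hT
  obtain ⟨ρ, hρ⟩ : ∃ ρ : X⟦(1 : ℤ)⟧ ⟶ A, α - vt = w ≫ ρ :=
    Triangle.yoneda_exact₂ _ hrot (α - vt)
      (by have : v ≫ (α - vt) = 0 := by rw [Preadditive.comp_sub, h1, sub_self]
          exact this)
  have hstep : w ≫ (𝟙 (X⟦(1 : ℤ)⟧) - ρ ≫ wt) = 0 := by
    rw [Preadditive.comp_sub, comp_id, ← assoc, ← hρ, Preadditive.sub_comp, h2, hvtwt,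
      sub_zero, sub_self]
  obtain ⟨t, ht⟩ : ∃ t : Y⟦(1 : ℤ)⟧ ⟶ X⟦(1 : ℤ)⟧,
      𝟙 (X⟦(1 : ℤ)⟧) - ρ ≫ wt = (-(u⟦(1 : ℤ)⟧')) ≫ t :=
    Triangle.yoneda_exact₂ _ hrot2 (𝟙 (X⟦(1 : ℤ)⟧) - ρ ≫ wt) hstep
  have hρwt : ρ ≫ wt = 𝟙 _ + u⟦(1 : ℤ)⟧' ≫ t := by
    calc ρ ≫ wt = 𝟙 _ - (𝟙 _ - ρ ≫ wt) := by abel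
    _ = 𝟙 _ + u⟦(1 : ℤ)⟧' ≫ t := by rw [ht]; simp
  have hβu : β ≫ u⟦(1 : ℤ)⟧' = -(wt ≫ u⟦(1 : ℤ)⟧') := by
    rw [Preadditive.comp_neg] at h4
    exact neg_eq_iff_eq_neg.mp h4
  refine ⟨𝟙 _ + ρ ≫ β + u⟦(1 : ℤ)⟧' ≫ t, ?_, ?_⟩
  · rw [Preadditive.comp_add, Preadditive.comp_add, comp_id]
    simp only [← assoc]
    rw [← hρ, hwu, zero_comp, add_zero, Preadditive.sub_comp, h3]
    abel
  · rw [Preadditive.add_comp, Preadditive.add_comp, id_comp, assoc, assoc, hβu, Preadditive.comp_neg, ← assoc,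
      hρwt, Preadditive.add_comp, id_comp, neg_add, assoc]
    abel

lemma c_of_vg (hT : Triangle.mk u v w ∈ distTriang C) (h : Z ⟶ X⟦(1 : ℤ)⟧)
    (hvg : IsVerdierGood (Triangle.mk u v w) (Triangle.mk v w (-(u⟦(1 : ℤ)⟧'))) u v h) :
    ∃ φ : X⟦(1 : ℤ)⟧ ⟶ X⟦(1 : ℤ)⟧, w ≫ φ = h ∧ φ ≫ u⟦(1 : ℤ)⟧' = 0 := by
  obtain ⟨A, Y'', X'', vt, wt, g', g'', f', f'', α₁, β₁, α₂, β₂, hΔ, hg, hf,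
    ⟨o11, o12, o13, o14, o15⟩, ⟨o21, o22, o23, o24, o25⟩, hh⟩ := hvg
  have hvtwt : vt ≫ wt = 0 := comp_distTriang_mor_zero₂₃ _ hΔ
  obtain ⟨φ, hφ1, hφ2⟩ := key_phi u v w hT vt wt α₁ β₂ hvtwt o11 o12 o23 o24
  exact ⟨φ, by rw [hφ1]; exact hh.symm, hφ2⟩

lemma vg_of_c (hT : Triangle.mk u v w ∈ distTriang C) (h : Z ⟶ X⟦(1 : ℤ)⟧)
    (φ : X⟦(1 : ℤ)⟧ ⟶ X⟦(1 : ℤ)⟧) (hφ1 : w ≫ φ = h) (hφ2 : φ ≫ u⟦(1 : ℤ)⟧' = 0) :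
    IsVerdierGood (Triangle.mk u v w) (Triangle.mk v w (-(u⟦(1 : ℤ)⟧'))) u v h := by
  have hrot : Triangle.mk v w (-(u⟦(1 : ℤ)⟧')) ∈ distTriang C := rot_of_distTriang _ hT
  have hrot2 : Triangle.mk w (-(u⟦(1 : ℤ)⟧')) (-(v⟦(1 : ℤ)⟧')) ∈ distTriang C :=
    rot_of_distTriang _ hrot
  obtain ⟨A, vt, wt, hΔ⟩ := distinguished_cocone_triangle (u ≫ v)
  have O := Triangulated.someOctahedron (u₁₂ := u) (u₂₃ := v) rfl hT hrot hΔ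
  have hvtwt : vt ≫ wt = 0 := comp_distTriang_mor_zero₂₃ _ hΔ
  have hwu : w ≫ u⟦(1 : ℤ)⟧' = 0 := comp_distTriang_mor_zero₃₁ _ hT
  have hvw : v ≫ w = 0 := comp_distTriang_mor_zero₂₃ _ hT
  obtain ⟨φ₀, hφ₀1, hφ₀2⟩ := key_phi u v w hT vt wt O.m₁ O.m₃ hvtwt O.comm₁ O.comm₂
    O.comm₃ O.comm₄.symm
  obtain ⟨θ, hθ⟩ : ∃ θ : X⟦(1 : ℤ)⟧ ⟶ Z, φ - φ₀ = θ ≫ w :=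
    Triangle.coyoneda_exact₂ _ hrot2 (φ - φ₀)
      (by have : (φ - φ₀) ≫ (-(u⟦(1 : ℤ)⟧')) = 0 := by
            simp [Preadditive.sub_comp, Preadditive.comp_neg, hφ2, hφ₀2]
          exact this)
  refine ⟨A, X⟦(1 : ℤ)⟧, Z, vt, wt, w, -(u⟦(1 : ℤ)⟧'), v, w, O.m₁, O.m₃,
    O.m₁ - w ≫ θ ≫ vt, O.m₃ + wt ≫ θ ≫ w, hΔ, hrot, hT,
    ⟨O.comm₁, O.comm₂, O.comm₃, O.comm₄.symm, O.mem⟩, ⟨?_, ?_, ?_, ?_, ?_⟩, ?_⟩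
  · show v ≫ (O.m₁ - w ≫ θ ≫ vt) = v ≫ vt
    rw [Preadditive.comp_sub, ← assoc, hvw, zero_comp, sub_zero]
    exact O.comm₁
  · show (O.m₁ - w ≫ θ ≫ vt) ≫ wt = w
    rw [Preadditive.sub_comp, O.comm₂, assoc, assoc, hvtwt, comp_zero, comp_zero, sub_zero]
  · show vt ≫ (O.m₃ + wt ≫ θ ≫ w) = w
    rw [Preadditive.comp_add, O.comm₃, ← assoc, hvtwt, zero_comp, add_zero]
  · show (O.m₃ + wt ≫ θ ≫ w) ≫ (-(u⟦(1 : ℤ)⟧')) = wt ≫ u⟦(1 : ℤ)⟧'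
    rw [Preadditive.add_comp, ← O.comm₄, assoc, assoc]
    have : w ≫ (-(u⟦(1 : ℤ)⟧')) = 0 := by rw [Preadditive.comp_neg, hwu, neg_zero]
    rw [this, comp_zero, comp_zero, add_zero]
  · refine isomorphic_distinguished _ O.mem _
      (Triangle.isoMk _ _ (Iso.refl _)
        (⟨𝟙 A + wt ≫ θ ≫ vt, 𝟙 A - wt ≫ θ ≫ vt,
          by simp [reassoc_of% hvtwt], by simp [reassoc_of% hvtwt]⟩ : A ≅ A)
        (Iso.refl _) ?_ ?_ ?_)
    · dsimp [Triangle.mk]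
      simp [Preadditive.comp_add, Preadditive.sub_comp, reassoc_of% O.comm₂,
        reassoc_of% hvtwt]
    · dsimp [Triangle.mk]
      simp [Preadditive.add_comp, O.comm₃]
    · dsimp [Triangle.mk]
      simp
  · show h = O.m₁ ≫ (O.m₃ + wt ≫ θ ≫ w)
    rw [Preadditive.comp_add, ← assoc, O.comm₂, ← hθ, Preadditive.comp_sub, hφ1, hφ₀1]
    abel


lemma c_of_contractible (hT : Triangle.mk u v w ∈ distTriang C)
    (hc : IsContractible (Triangle.mk u v w)) :
    ∃ φ : X⟦(1 : ℤ)⟧ ⟶ X⟦(1 : ℤ)⟧, w ≫ φ = w ∧ φ ≫ u⟦(1 : ℤ)⟧' = 0 := by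
  have hvw : v ≫ w = 0 := comp_distTriang_mor_zero₂₃ _ hT
  have hwu : w ≫ u⟦(1 : ℤ)⟧' = 0 := comp_distTriang_mor_zero₃₁ _ hT
  obtain ⟨F, G, H, e1, e2, e3⟩ :
      ∃ (F : Y ⟶ X) (G : Z ⟶ Y) (H : X⟦(1 : ℤ)⟧ ⟶ Z),
        (𝟙 X)⟦(1 : ℤ)⟧' = u⟦(1 : ℤ)⟧' ≫ F⟦(1 : ℤ)⟧' + H ≫ w ∧
        𝟙 Y = v ≫ G + F ≫ u ∧ 𝟙 Z = w ≫ H + G ≫ v := hc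
  refine ⟨H ≫ w, ?_, ?_⟩
  · have hwH : w ≫ H = 𝟙 Z - G ≫ v := by rw [e3]; abel
    rw [← assoc, hwH, Preadditive.sub_comp, id_comp, assoc, hvw, comp_zero, sub_zero]
  · rw [assoc, hwu, comp_zero]

lemma contractible_of_c (hT : Triangle.mk u v w ∈ distTriang C)
    (φ : X⟦(1 : ℤ)⟧ ⟶ X⟦(1 : ℤ)⟧) (hφ1 : w ≫ φ = w) (hφ2 : φ ≫ u⟦(1 : ℤ)⟧' = 0) :
    IsContractible (Triangle.mk u v w) := by
  have hrot : Triangle.mk v w (-(u⟦(1 : ℤ)⟧')) ∈ distTriang C := rot_of_distTriang _ hT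
  have hrot2 : Triangle.mk w (-(u⟦(1 : ℤ)⟧')) (-(v⟦(1 : ℤ)⟧')) ∈ distTriang C :=
    rot_of_distTriang _ hrot
  have huv : u ≫ v = 0 := comp_distTriang_mor_zero₁₂ _ hT
  have hvw : v ≫ w = 0 := comp_distTriang_mor_zero₂₃ _ hT
  have hwu : w ≫ u⟦(1 : ℤ)⟧' = 0 := comp_distTriang_mor_zero₃₁ _ hT
  obtain ⟨θ, hθ⟩ : ∃ θ : X⟦(1 : ℤ)⟧ ⟶ Z, φ = θ ≫ w :=
    Triangle.coyoneda_exact₂ _ hrot2 φ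
      (by have : φ ≫ (-(u⟦(1 : ℤ)⟧')) = 0 := by rw [Preadditive.comp_neg, hφ2, neg_zero]
          exact this)
  obtain ⟨G, hG⟩ : ∃ G : Z ⟶ Y, 𝟙 Z - w ≫ θ = G ≫ v :=
    Triangle.coyoneda_exact₂ _ hrot (𝟙 Z - w ≫ θ)
      (by have : (𝟙 Z - w ≫ θ) ≫ w = 0 := by
            rw [Preadditive.sub_comp, id_comp, assoc, ← hθ, hφ1, sub_self]
          exact this)
  obtain ⟨F, hF⟩ : ∃ F : Y ⟶ X, 𝟙 Y - v ≫ G = F ≫ u :=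
    Triangle.coyoneda_exact₂ _ hT (𝟙 Y - v ≫ G)
      (by have : (𝟙 Y - v ≫ G) ≫ v = 0 := by
            rw [Preadditive.sub_comp, id_comp, assoc, ← hG, Preadditive.comp_sub, comp_id,
              ← assoc, hvw, zero_comp, sub_zero, sub_self]
          exact this)
  have huFu : (u ≫ F) ≫ u = u := by
    rw [assoc, ← hF, Preadditive.comp_sub, comp_id, ← assoc, huv, zero_comp, sub_zero]
  set e : X⟦(1 : ℤ)⟧ ⟶ X⟦(1 : ℤ)⟧ :=
    𝟙 (X⟦(1 : ℤ)⟧) - (u ≫ F)⟦(1 : ℤ)⟧' - θ ≫ w with he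
  have hwe : w ≫ e = 0 := by
    rw [he, Preadditive.comp_sub, Preadditive.comp_sub, comp_id, Functor.map_comp, ← assoc,
      hwu, zero_comp, sub_zero, ← hθ, hφ1, sub_self]
  have heu : e ≫ u⟦(1 : ℤ)⟧' = 0 := by
    rw [he, Preadditive.sub_comp, Preadditive.sub_comp, id_comp, ← Functor.map_comp, huFu,
      assoc, hwu, comp_zero, sub_zero, sub_self]
  obtain ⟨t₀, ht₀⟩ : ∃ t₀ : Y⟦(1 : ℤ)⟧ ⟶ X⟦(1 : ℤ)⟧, e = (-(u⟦(1 : ℤ)⟧')) ≫ t₀ :=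
    Triangle.yoneda_exact₂ _ hrot2 e hwe
  obtain ⟨s₀, hs₀⟩ : ∃ s₀ : Y⟦(1 : ℤ)⟧ ⟶ Z, t₀ ≫ e = s₀ ≫ w :=
    Triangle.coyoneda_exact₂ _ hrot2 (t₀ ≫ e)
      (by have : (t₀ ≫ e) ≫ (-(u⟦(1 : ℤ)⟧')) = 0 := by
            rw [Preadditive.comp_neg, assoc, heu, comp_zero, neg_zero]
          exact this)
  have h2 : e ≫ e = e - e ≫ θ ≫ w := by
    nth_rewrite 2 [he]
    rw [Preadditive.comp_sub, Preadditive.comp_sub, comp_id, Functor.map_comp, ← assoc,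
      heu, zero_comp, sub_zero]
  have h3 : e ≫ e = (-(u⟦(1 : ℤ)⟧')) ≫ s₀ ≫ w := by
    nth_rewrite 1 [ht₀]
    rw [assoc, hs₀]
  have h4 : e ≫ θ ≫ w = (-(u⟦(1 : ℤ)⟧')) ≫ (t₀ ≫ θ) ≫ w := by
    rw [ht₀]
    simp only [assoc]
  have hee : e = (-(u⟦(1 : ℤ)⟧')) ≫ (s₀ + t₀ ≫ θ) ≫ w := by
    have : e = e ≫ e + e ≫ θ ≫ w := by rw [h2]; abel
    rw [this, h3, h4, Preadditive.add_comp, Preadditive.comp_add]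
  refine ⟨F, G, θ - u⟦(1 : ℤ)⟧' ≫ (s₀ + t₀ ≫ θ), ?_, ?_, ?_⟩
  · show (𝟙 X)⟦(1 : ℤ)⟧' =
      u⟦(1 : ℤ)⟧' ≫ F⟦(1 : ℤ)⟧' + (θ - u⟦(1 : ℤ)⟧' ≫ (s₀ + t₀ ≫ θ)) ≫ w
    have h5 : (u⟦(1 : ℤ)⟧' ≫ (s₀ + t₀ ≫ θ)) ≫ w = -e := by
      rw [hee, Preadditive.neg_comp, neg_neg, assoc]
    rw [CategoryTheory.Functor.map_id, ← Functor.map_comp, Preadditive.sub_comp, h5, he]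
    abel
  · show 𝟙 Y = v ≫ G + F ≫ u
    rw [← hF]; abel
  · show 𝟙 Z = w ≫ (θ - u⟦(1 : ℤ)⟧' ≫ (s₀ + t₀ ≫ θ)) + G ≫ v
    rw [Preadditive.comp_sub, ← assoc, hwu, zero_comp, sub_zero, ← hG]
    abel

end Main19

end Aux19

set_option maxHeartbeats 1000000 in
theorem stmt_19 {X Y Z : C}
    (u : X ⟶ Y) (v : Y ⟶ Z) (w : Z ⟶ X⟦(1 : ℤ)⟧)
    (hT : Triangle.mk u v w ∈ distTriang C)
    (h : Z ⟶ X⟦(1 : ℤ)⟧)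
    (hmap : IsTriMap (Triangle.mk u v w) (Triangle.mk v w (-(u⟦(1 : ℤ)⟧'))) u v h) :
    (IsGood (Triangle.mk u v w) (Triangle.mk v w (-(u⟦(1 : ℤ)⟧'))) u v h ↔ IsVerdierGood (Triangle.mk u v w) (Triangle.mk v w (-(u⟦(1 : ℤ)⟧'))) u v h) ∧
    (IsVerdierGood (Triangle.mk u v w) (Triangle.mk v w (-(u⟦(1 : ℤ)⟧'))) u v h ↔
      ∃ φ : X⟦(1 : ℤ)⟧ ⟶ X⟦(1 : ℤ)⟧, w ≫ φ = h ∧ φ ≫ u⟦(1 : ℤ)⟧' = 0) ∧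
    ((∃ φ : X⟦(1 : ℤ)⟧ ⟶ X⟦(1 : ℤ)⟧, w ≫ φ = h ∧ φ ≫ u⟦(1 : ℤ)⟧' = 0) ↔
      ∃ θ : X⟦(1 : ℤ)⟧ ⟶ Z, h = w ≫ θ ≫ w) ∧
    (h = w → (IsGood (Triangle.mk u v w) (Triangle.mk v w (-(u⟦(1 : ℤ)⟧'))) u v h ↔ IsContractible (Triangle.mk u v w))) := by
  have hrot : Triangle.mk v w (-(u⟦(1 : ℤ)⟧')) ∈ distTriang C := rot_of_distTriang _ hT
  have hrot2 : Triangle.mk w (-(u⟦(1 : ℤ)⟧')) (-(v⟦(1 : ℤ)⟧')) ∈ distTriang C :=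
    rot_of_distTriang _ hrot
  have hwu : w ≫ u⟦(1 : ℤ)⟧' = 0 := comp_distTriang_mor_zero₃₁ _ hT
  refine ⟨⟨?_, ?_⟩, ⟨?_, ?_⟩, ⟨?_, ?_⟩, ?_⟩
  · intro hg
    obtain ⟨φ, h1, h2⟩ := c_of_good u v w hT h hg
    exact vg_of_c u v w hT h φ h1 h2
  · intro hvg
    obtain ⟨φ, h1, h2⟩ := c_of_vg u v w hT h hvg
    exact good_of_c u v w hT h φ h1 h2
  · intro hvg
    exact c_of_vg u v w hT h hvg
  · rintro ⟨φ, h1, h2⟩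
    exact vg_of_c u v w hT h φ h1 h2
  · rintro ⟨φ, h1, h2⟩
    obtain ⟨θ, hθ⟩ : ∃ θ : X⟦(1 : ℤ)⟧ ⟶ Z, φ = θ ≫ w :=
      Triangle.coyoneda_exact₂ _ hrot2 φ
        (by have : φ ≫ (-(u⟦(1 : ℤ)⟧')) = 0 := by rw [Preadditive.comp_neg, h2, neg_zero]
            exact this)
    exact ⟨θ, by rw [← h1, hθ]⟩
  · rintro ⟨θ, hθ⟩
    refine ⟨θ ≫ w, hθ.symm, ?_⟩
    rw [assoc, hwu, comp_zero]
  · intro hw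
    constructor
    · intro hg
      obtain ⟨φ, h1, h2⟩ := c_of_good u v w hT h hg
      exact contractible_of_c u v w hT φ (by rw [h1, hw]) h2
    · intro hc
      obtain ⟨φ, h1, h2⟩ := c_of_contractible u v w hT hc
      exact good_of_c u v w hT h φ (by rw [h1, hw]) h2
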